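/- Let G be a graph, n ≥ 1 a natural number, and let a be a set of at least n vertices of G. Then there is at most one maximal n-connected set A of vertices of G with a ⊆ A. -/

import Mathlib

/-!
Two `n`-connected sets sharing at least `n` vertices have an `n`-connected union: deleting
fewer than `n` vertices leaves both parts connected and leaves a common vertex joining them.
Hence two maximal `n`-connected sets containing `a` both equal their union.
-/

/-- A set `A` of vertices spans an `n`-connected subgraph of `G` iff for every
`F ⊆ A` with `|F| < n`, the subgraph of `G` induced on `A \ F` is connected. -/
def SpansNConnected {V : Type*} (G : SimpleGraph V) (n : ℕ) (A : Set V) : Prop :=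
  ∀ F : Finset V, ↑F ⊆ A → F.card < n → (G.induce (A \ ↑F)).Connected

/-- `A` is a maximal `n`-connected set iff it spans an `n`-connected subgraph and no
proper superset of it does. -/
def MaximalNConnected {V : Type*} (G : SimpleGraph V) (n : ℕ) (A : Set V) : Prop :=
  SpansNConnected G n A ∧ ∀ B : Set V, A ⊆ B → SpansNConnected G n B → B = A

lemma Set.nonempty_sdiff_finset_of_card_lt {V : Type*} {s : Set V} {n : ℕ}
    (hs : (n : Cardinal) ≤ Cardinal.mk s) {F : Finset V} (hF : F.card < n) :
    (s \ ↑F).Nonempty := by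
  by_contra hempty
  have hsF : s ⊆ ↑F := Set.sdiff_eq_empty.mp (Set.not_nonempty_iff_eq_empty.mp hempty)
  have : (n : Cardinal) ≤ F.card :=
    hs.trans ((Cardinal.mk_le_mk_of_subset hsF).trans_eq Cardinal.mk_coe_finset)
  exact hF.not_ge (mod_cast this)

namespace SpansNConnected

variable {V : Type*} {G : SimpleGraph V} {n : ℕ} {A B : Set V}

lemma connected_induce_sdiff (hA : SpansNConnected G n A) {F : Finset V} (hF : F.card < n) :
    (G.induce (A \ ↑F)).Connected := by
  classical
  have h := hA (F.filter (· ∈ A)) (fun x hx => (Finset.mem_filter.mp hx).2)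
    ((Finset.card_filter_le _ _).trans_lt hF)
  have hcoe : (↑(F.filter (· ∈ A)) : Set V) = ↑F ∩ A := by ext; simp
  rwa [hcoe, Set.sdiff_inter_self_eq_sdiff] at h

lemma union (hA : SpansNConnected G n A) (hB : SpansNConnected G n B)
    (hAB : (n : Cardinal) ≤ Cardinal.mk ↥(A ∩ B)) : SpansNConnected G n (A ∪ B) := by
  intro F _ hF
  rw [Set.union_sdiff_distrib]
  refine SimpleGraph.induce_union_connected (hA.connected_induce_sdiff hF).preconnected
    (hB.connected_induce_sdiff hF).preconnected ?_
  obtain ⟨z, ⟨hzA, hzB⟩, hzF⟩ := Set.nonempty_sdiff_finset_of_card_lt hAB hF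
  exact ⟨z, ⟨hzA, hzF⟩, hzB, hzF⟩

end SpansNConnected

theorem maximal_nconnected_unique_general {V : Type*} (G : SimpleGraph V) (n : ℕ)
    (a : Set V) (ha : (n : Cardinal) ≤ Cardinal.mk ↥a) :
    ∀ A A' : Set V, MaximalNConnected G n A → MaximalNConnected G n A' →
      a ⊆ A → a ⊆ A' → A = A' := by
  intro A A' hA hA' haA haA'
  have hunion : SpansNConnected G n (A ∪ A') :=
    hA.1.union hA'.1 (ha.trans (Cardinal.mk_le_mk_of_subset (Set.subset_inter haA haA')))
  exact (hA.2 _ Set.subset_union_left hunion).symm.trans (hA'.2 _ Set.subset_union_right hunion)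

/-- A set of at least `n` vertices is contained in at most one maximal `n`-connected
set. -/
theorem maximal_nconnected_unique {V : Type*} (G : SimpleGraph V) (n : ℕ) (hn : 1 ≤ n)
    (a : Set V) (ha : (n : Cardinal) ≤ Cardinal.mk ↥a) :
    ∀ A A' : Set V, MaximalNConnected G n A → MaximalNConnected G n A' →
      a ⊆ A → a ⊆ A' → A = A' :=
  maximal_nconnected_unique_general G n a ha
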